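/- Let D = (V,E) be a time-invariant digraph and f ∈ [0,1/2], and suppose S_1, S_2 ⊂ V are nonempty, disjoint sets, neither of which is f-fraction edge reachable. Let a < b and consider any Carathéodory solution of the dynamics in which every agent updates according to ARC-P with parameter f (all agents behaving normally), with initial values x_i(0) = a for i ∈ S_1, x_i(0) = b for i ∈ S_2, and x_i(0) ∈ [a,b] for all other i. Then x_i(t) = a for all i ∈ S_1 and x_i(t) = b for all i ∈ S_2 and all t ≥ 0; in particular, the agents do not reach asymptotic consensus. -/

import Mathlib

open Finset Filter Topology MeasureTheory

namespace ARCP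

variable {n : ℕ}

/-- `R` is a valid ARC-P removal of the (up to) `F` largest neighboring values. -/
def RemovalHigh (Nin : Finset (Fin n)) (v : Fin n → ℝ) (xi : ℝ) (F : ℕ)
    (R : Finset (Fin n)) : Prop :=
  R ⊆ Nin ∧
    (((Nin.filter fun j => xi < v j).card < F ∧ R = Nin.filter fun j => xi < v j) ∨
      (F ≤ (Nin.filter fun j => xi < v j).card ∧ R.card = F ∧
        ∀ j ∈ R, ∀ k ∈ Nin \ R, v k ≤ v j))

/-- `R` is a valid ARC-P removal of the (up to) `F` smallest neighboring values. -/
def RemovalLow (Nin : Finset (Fin n)) (v : Fin n → ℝ) (xi : ℝ) (F : ℕ)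
    (R : Finset (Fin n)) : Prop :=
  R ⊆ Nin ∧
    (((Nin.filter fun j => v j < xi).card < F ∧ R = Nin.filter fun j => v j < xi) ∨
      (F ≤ (Nin.filter fun j => v j < xi).card ∧ R.card = F ∧
        ∀ j ∈ R, ∀ k ∈ Nin \ R, v j ≤ v k))

/-- `R` is a valid set of in-neighbors removed by the ARC-P rule with threshold `F`. -/
def IsARCPRemoval (Nin : Finset (Fin n)) (v : Fin n → ℝ) (xi : ℝ) (F : ℕ)
    (R : Finset (Fin n)) : Prop :=
  ∃ Rhi Rlo : Finset (Fin n),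
    R = Rhi ∪ Rlo ∧ RemovalHigh Nin v xi F Rhi ∧ RemovalLow Nin v xi F Rlo

/-- The ARC-P control input: `∑_{j ∈ Nin \ R} w j * (v j - xi)`. -/
def arcpUpdate (Nin R : Finset (Fin n)) (w : Fin n → ℝ) (v : Fin n → ℝ) (xi : ℝ) : ℝ :=
  ∑ j ∈ Nin \ R, w j * (v j - xi)

/-- `S` is a `p`-fraction edge reachable set of the digraph with in-neighborhoods `Nin`. -/
def FracEdgeReachable (Nin : Fin n → Finset (Fin n)) (p : ℝ) (S : Finset (Fin n)) : Prop :=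
  (∃ i ∈ S, 0 < (Nin i).card ∧ ⌈p * (((Nin i).card : ℝ))⌉₊ ≤ ((Nin i) \ S).card) ∨
    (p = 0 ∧ ∀ i ∈ S, ((Nin i) \ S).card = 0)

end ARCP

/-!
If every agent `i ∈ S` has at most `F i = ⌊f dᵢ⌋` in-neighbours outside `S` (which is what
non-reachability gives), then every neighbour kept by `i` with a value above `xᵢ` is dominated by
a value in `S`: if it is not in `S` itself, `F i` values at least as large were removed, and they
cannot all lie outside `S`. So while `xᵢ > c`, the rate of `i` is at most `nβ` times the total
excess `E = ∑_{j ∈ S} (x_j - c)⁺`. Integrating from the last time `xᵢ ≤ c` gives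
`E(t) ≤ |S| n β ∫₀ᵗ E`, and Grönwall forces `E = 0`. The same argument for `-x` bounds `S` from
below, so a set that starts at a common value keeps it; `S₁` held at `a` and `S₂` held at `b`
rule out consensus.
-/
lemma exists_last_le_of_continuousOn {y : ℝ → ℝ} {a t c : ℝ} (hat : a ≤ t)
    (hy : ContinuousOn y (Set.Icc a t)) (ha : y a ≤ c) :
    ∃ s₀ ∈ Set.Icc a t, y s₀ ≤ c ∧ ∀ s ∈ Set.Ioc s₀ t, c < y s := by
  have hE : IsCompact (Set.Icc a t ∩ y ⁻¹' Set.Iic c) :=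
    isCompact_Icc.of_isClosed_subset
      (hy.preimage_isClosed_of_isClosed isClosed_Icc isClosed_Iic) Set.inter_subset_left
  obtain ⟨s₀, ⟨hs₀, hys₀⟩, hgreatest⟩ := hE.exists_isGreatest ⟨a, ⟨le_rfl, hat⟩, ha⟩
  refine ⟨s₀, hs₀, hys₀, fun s hs => lt_of_not_ge fun hys => ?_⟩
  exact hs.1.not_ge (hgreatest ⟨⟨hs₀.1.trans hs.1.le, hs.2⟩, hys⟩)

lemma continuousOn_Icc_of_eq_add_integral {y u : ℝ → ℝ} {T : ℝ} (hT : 0 ≤ T)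
    (hu : IntervalIntegrable u volume 0 T)
    (hsol : ∀ t ∈ Set.Icc 0 T, y t = y 0 + ∫ s in (0 : ℝ)..t, u s) :
    ContinuousOn y (Set.Icc 0 T) := by
  have hprim := intervalIntegral.continuousOn_primitive_interval' hu Set.left_mem_uIcc
  rw [Set.uIcc_of_le hT] at hprim
  exact (continuousOn_const.add hprim).congr hsol

lemma max_sub_le_mul_integral {y u V : ℝ → ℝ} {c C t : ℝ} (ht : 0 ≤ t) (hC : 0 ≤ C)
    (hy : ContinuousOn y (Set.Icc 0 t)) (hu : IntervalIntegrable u volume 0 t)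
    (hV : IntervalIntegrable V volume 0 t) (hV0 : ∀ s, 0 ≤ V s)
    (hsol : ∀ s ∈ Set.Icc 0 t, y s = y 0 + ∫ r in (0 : ℝ)..s, u r) (h0 : y 0 ≤ c)
    (hbd : ∀ s ∈ Set.Icc 0 t, c < y s → u s ≤ C * V s) :
    max (y t - c) 0 ≤ C * ∫ s in (0 : ℝ)..t, V s := by
  have hCI : 0 ≤ C * ∫ s in (0 : ℝ)..t, V s :=
    mul_nonneg hC (intervalIntegral.integral_nonneg ht fun s _ => hV0 s)
  refine max_le ?_ hCI
  rcases le_or_gt (y t) c with hyt | hyt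
  · linarith
  obtain ⟨s₀, hs₀, hys₀, habove⟩ := exists_last_le_of_continuousOn ht hy h0
  have hsub : Set.uIcc s₀ t ⊆ Set.uIcc 0 t :=
    Set.uIcc_subset_uIcc (Set.mem_uIcc_of_le hs₀.1 hs₀.2) Set.right_mem_uIcc
  have hu₀ : IntervalIntegrable u volume 0 s₀ :=
    hu.mono_set (Set.uIcc_subset_uIcc Set.left_mem_uIcc (Set.mem_uIcc_of_le hs₀.1 hs₀.2))
  calc y t - c ≤ y t - y s₀ := by linarith
    _ = ∫ s in s₀..t, u s := by
      rw [hsol t ⟨ht, le_rfl⟩, hsol s₀ hs₀, ← intervalIntegral.integral_interval_sub_left hu hu₀]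
      ring
    _ ≤ ∫ s in s₀..t, C * V s :=
      intervalIntegral.integral_mono_on_of_le_Ioo hs₀.2 (hu.mono_set hsub)
        ((hV.mono_set hsub).const_mul C) fun s hs =>
          hbd s ⟨hs₀.1.trans hs.1.le, hs.2.le⟩ (habove s (Set.Ioo_subset_Ioc_self hs))
    _ = C * ∫ s in s₀..t, V s := intervalIntegral.integral_const_mul C V
    _ ≤ C * ∫ s in (0 : ℝ)..t, V s := by
      gcongr
      exact intervalIntegral.integral_mono_interval hs₀.1 hs₀.2 le_rfl
        (Eventually.of_forall hV0) hV

/-- `∫₀ᵗ V` vanishes at `0` and has right derivative `V t ≤ K ∫₀ᵗ V`, so Grönwall applies. -/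
lemma eq_zero_of_le_mul_integral {V : ℝ → ℝ} {K T : ℝ} (hV : ContinuousOn V (Set.Icc 0 T))
    (hV0 : ∀ t, 0 ≤ V t) (hle : ∀ t ∈ Set.Icc 0 T, V t ≤ K * ∫ s in (0 : ℝ)..t, V s) :
    ∀ t ∈ Set.Icc 0 T, V t = 0 := by
  intro t ht
  have hT : 0 ≤ T := ht.1.trans ht.2
  have hVi : IntervalIntegrable V volume 0 T := hV.intervalIntegrable_of_Icc hT
  have hI0 : ∀ s, 0 ≤ s → 0 ≤ ∫ r in (0 : ℝ)..s, V r :=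
    fun s hs => intervalIntegral.integral_nonneg hs fun r _ => hV0 r
  have hIcont : ContinuousOn (fun s => ∫ r in (0 : ℝ)..s, V r) (Set.Icc 0 T) := by
    simpa only [Set.uIcc_of_le hT] using
      intervalIntegral.continuousOn_primitive_interval' hVi Set.left_mem_uIcc
  have hderiv : ∀ s ∈ Set.Ico 0 T,
      HasDerivWithinAt (fun s => ∫ r in (0 : ℝ)..s, V r) (V s) (Set.Ici s) s := by
    intro s hs
    have hmem : Set.Icc 0 T ∈ 𝓝[>] s :=
      mem_of_superset (Ioo_mem_nhdsGT hs.2) fun r hr => ⟨hs.1.trans hr.1.le, hr.2.le⟩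
    exact intervalIntegral.integral_hasDerivWithinAt_right
      (hVi.mono_set (Set.uIcc_subset_uIcc Set.left_mem_uIcc (Set.mem_uIcc_of_le hs.1 hs.2.le)))
      ((hV.stronglyMeasurableAtFilter_nhdsWithin measurableSet_Icc s).filter_mono
        (nhdsWithin_le_of_mem hmem))
      ((hV s (Set.Ico_subset_Icc_self hs)).mono_of_mem_nhdsWithin hmem)
  have hIzero := eq_zero_of_abs_deriv_le_mul_abs_self_of_eq_zero_right hIcont hderiv
    intervalIntegral.integral_same fun s hs => by
      rw [Real.norm_of_nonneg (hV0 s), Real.norm_of_nonneg (hI0 s hs.1)]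
      exact hle s (Set.Ico_subset_Icc_self hs)
  have hVt := hle t ht
  rw [hIzero t ht, mul_zero] at hVt
  exact hVt.antisymm (hV0 t)

theorem forall_le_of_lt_imp_le_mul_sum_excess {ι : Type*} (S : Finset ι) {y u : ι → ℝ → ℝ}
    {c C : ℝ} (hC : 0 ≤ C) (hu : ∀ i ∈ S, ∀ t, 0 ≤ t → IntervalIntegrable (u i) volume 0 t)
    (hsol : ∀ i ∈ S, ∀ t, 0 ≤ t → y i t = y i 0 + ∫ s in (0 : ℝ)..t, u i s)
    (h0 : ∀ i ∈ S, y i 0 ≤ c)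
    (hbd : ∀ i ∈ S, ∀ t, 0 ≤ t → c < y i t → u i t ≤ C * ∑ j ∈ S, max (y j t - c) 0) :
    ∀ t, 0 ≤ t → ∀ i ∈ S, y i t ≤ c := by
  intro T hT
  have hy : ∀ i ∈ S, ∀ t, 0 ≤ t → ContinuousOn (y i) (Set.Icc 0 t) := fun i hi t ht =>
    continuousOn_Icc_of_eq_add_integral ht (hu i hi t ht) fun s hs => hsol i hi s hs.1
  set V : ℝ → ℝ := fun t => ∑ j ∈ S, max (y j t - c) 0
  have hV0 : ∀ t, 0 ≤ V t := fun t => sum_nonneg fun j _ => le_max_right _ _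
  have hVcont : ∀ t, 0 ≤ t → ContinuousOn V (Set.Icc 0 t) := fun t ht =>
    continuousOn_finsetSum S fun j hj =>
      ((hy j hj t ht).sub continuousOn_const).sup continuousOn_const
  have hle : ∀ t ∈ Set.Icc 0 T, V t ≤ (#S * C) * ∫ s in (0 : ℝ)..t, V s := by
    intro t ht
    calc V t ≤ ∑ _j ∈ S, C * ∫ s in (0 : ℝ)..t, V s :=
          sum_le_sum fun j hj => max_sub_le_mul_integral ht.1 hC (hy j hj t ht.1) (hu j hj t ht.1)
            ((hVcont t ht.1).intervalIntegrable_of_Icc ht.1) hV0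
            (fun s hs => hsol j hj s hs.1) (h0 j hj) fun s hs => hbd j hj s hs.1
      _ = (#S * C) * ∫ s in (0 : ℝ)..t, V s := by rw [sum_const, nsmul_eq_mul, mul_assoc]
  have hVT : V T = 0 := eq_zero_of_le_mul_integral (hVcont T hT) hV0 hle T ⟨hT, le_rfl⟩
  intro i hi
  have hexcess : max (y i T - c) 0 = 0 :=
    (sum_eq_zero_iff_of_nonneg fun j _ => le_max_right _ _).1 hVT i hi
  linarith [le_max_left (y i T - c) 0]

lemma sum_mul_sub_le_card_mul {ι : Type*} (s : Finset ι) {w v : ι → ℝ} {xi β B : ℝ}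
    (hB : 0 ≤ B) (hw : ∀ j ∈ s, 0 ≤ w j ∧ w j ≤ β) (hv : ∀ j ∈ s, xi < v j → v j - xi ≤ B) :
    ∑ j ∈ s, w j * (v j - xi) ≤ #s * (β * B) := by
  rw [← nsmul_eq_mul]
  refine sum_le_card_nsmul s _ _ fun j hj => ?_
  obtain ⟨hw0, hwβ⟩ := hw j hj
  rcases le_or_gt (v j) xi with hle | hlt
  · exact (mul_nonpos_of_nonneg_of_nonpos hw0 (by linarith)).trans
      (mul_nonneg (hw0.trans hwβ) hB)
  · calc w j * (v j - xi) ≤ w j * B := mul_le_mul_of_nonneg_left (hv j hj hlt) hw0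
      _ ≤ β * B := mul_le_mul_of_nonneg_right hwβ hB

namespace ARCP

variable {n : ℕ}

lemma removalLow_iff_removalHigh_neg {Nin R : Finset (Fin n)} {v : Fin n → ℝ} {xi : ℝ}
    {F : ℕ} : RemovalLow Nin v xi F R ↔ RemovalHigh Nin (fun j => -v j) (-xi) F R := by
  simp only [RemovalLow, RemovalHigh, neg_lt_neg_iff, neg_le_neg_iff]

lemma IsARCPRemoval.neg {Nin R : Finset (Fin n)} {v : Fin n → ℝ} {xi : ℝ} {F : ℕ}
    (h : IsARCPRemoval Nin v xi F R) : IsARCPRemoval Nin (fun j => -v j) (-xi) F R := by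
  obtain ⟨Rhi, Rlo, rfl, hhi, hlo⟩ := h
  refine ⟨Rlo, Rhi, union_comm _ _, removalLow_iff_removalHigh_neg.1 hlo, ?_⟩
  rw [removalLow_iff_removalHigh_neg]
  simpa only [neg_neg] using hhi

lemma arcpUpdate_neg (Nin R : Finset (Fin n)) (w v : Fin n → ℝ) (xi : ℝ) :
    arcpUpdate Nin R w (fun j => -v j) (-xi) = -arcpUpdate Nin R w v xi := by
  simp only [arcpUpdate, ← sum_neg_distrib]
  exact sum_congr rfl fun j _ => by ring

lemma card_sdiff_le_floor_of_not_fracEdgeReachable {Nin : Fin n → Finset (Fin n)} {p : ℝ}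
    {S : Finset (Fin n)} (h : ¬ FracEdgeReachable Nin p S) {i : Fin n} (hi : i ∈ S) :
    #(Nin i \ S) ≤ ⌊p * #(Nin i)⌋₊ := by
  rcases Nat.eq_zero_or_pos #(Nin i) with hzero | hpos
  · have := card_le_card (sdiff_subset (s := Nin i) (t := S))
    omega
  · have hceil : #(Nin i \ S) < ⌈p * #(Nin i)⌉₊ :=
      lt_of_not_ge fun hle => h (Or.inl ⟨i, hi, hpos, hle⟩)
    have := Nat.ceil_le_floor_add_one (p * #(Nin i))
    omega

lemma RemovalHigh.exists_mem_le {Nin R S : Finset (Fin n)} {v : Fin n → ℝ} {xi : ℝ} {F : ℕ}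
    (hR : RemovalHigh Nin v xi F R) (hout : #(Nin \ S) ≤ F) {j : Fin n} (hj : j ∈ Nin \ R)
    (hxj : xi < v j) : ∃ r ∈ S, v j ≤ v r := by
  by_cases hjS : j ∈ S
  · exact ⟨j, hjS, le_rfl⟩
  obtain ⟨hRN, ⟨-, rfl⟩ | ⟨-, hcard, hdom⟩⟩ := hR
  · exact absurd (mem_filter.2 ⟨(mem_sdiff.1 hj).1, hxj⟩ : j ∈ Nin.filter fun k => xi < v k)
      (mem_sdiff.1 hj).2
  obtain ⟨r, hrR, hrS⟩ : ∃ r ∈ R, r ∈ S := by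
    by_contra! hRS
    have hsub : insert j R ⊆ Nin \ S := insert_subset (mem_sdiff.2 ⟨(mem_sdiff.1 hj).1, hjS⟩)
      fun r hr => mem_sdiff.2 ⟨hRN hr, hRS r hr⟩
    have := card_le_card hsub
    rw [card_insert_of_notMem (mem_sdiff.1 hj).2] at this
    omega
  exact ⟨r, hrS, hdom r hrR j hj⟩

theorem arcpUpdate_le_mul_sum_excess {Nin R S : Finset (Fin n)} {v w : Fin n → ℝ}
    {xi c β : ℝ} {F : ℕ} (hR : IsARCPRemoval Nin v xi F R) (hout : #(Nin \ S) ≤ F)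
    (hβ : 0 ≤ β) (hw : ∀ j ∈ Nin, 0 ≤ w j ∧ w j ≤ β) (hc : c ≤ xi) :
    arcpUpdate Nin R w v xi ≤ (n * β) * ∑ j ∈ S, max (v j - c) 0 := by
  obtain ⟨Rhi, Rlo, rfl, hhi, -⟩ := hR
  have hB : 0 ≤ ∑ j ∈ S, max (v j - c) 0 := sum_nonneg fun _ _ => le_max_right _ _
  have hdom : ∀ j ∈ Nin \ (Rhi ∪ Rlo), xi < v j → v j - xi ≤ ∑ j ∈ S, max (v j - c) 0 := by
    intro j hj hxj
    obtain ⟨r, hrS, hjr⟩ :=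
      hhi.exists_mem_le hout (sdiff_subset_sdiff le_rfl subset_union_left hj) hxj
    calc v j - xi ≤ max (v r - c) 0 := le_max_of_le_left (by linarith)
      _ ≤ ∑ j ∈ S, max (v j - c) 0 :=
        single_le_sum (f := fun j => max (v j - c) 0) (fun _ _ => le_max_right _ _) hrS
  calc arcpUpdate Nin (Rhi ∪ Rlo) w v xi
      ≤ #(Nin \ (Rhi ∪ Rlo)) * (β * ∑ j ∈ S, max (v j - c) 0) :=
        sum_mul_sub_le_card_mul _ hB (fun j hj => hw j (mem_sdiff.1 hj).1) hdom
    _ ≤ n * (β * ∑ j ∈ S, max (v j - c) 0) := by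
        gcongr
        simpa using card_le_univ (Nin \ (Rhi ∪ Rlo))
    _ = (n * β) * ∑ j ∈ S, max (v j - c) 0 := (mul_assoc _ _ _).symm

structure IsSolution (Nin : Fin n → Finset (Fin n)) (F : Fin n → ℕ)
    (w : ℝ → Fin n → Fin n → ℝ) (x : Fin n → ℝ → ℝ) (R : ℝ → Fin n → Finset (Fin n)) :
    Prop where
  removal : ∀ t i, IsARCPRemoval (Nin i) (fun j => x j t) (x i t) (F i) (R t i)
  integrable : ∀ i t, 0 ≤ t → IntervalIntegrable
    (fun s => arcpUpdate (Nin i) (R s i) (fun j => w s j i) (fun j => x j s) (x i s)) volume 0 t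
  eq_add_integral : ∀ i t, 0 ≤ t → x i t = x i 0 + ∫ s in (0 : ℝ)..t,
    arcpUpdate (Nin i) (R s i) (fun j => w s j i) (fun j => x j s) (x i s)

namespace IsSolution

variable {Nin : Fin n → Finset (Fin n)} {F : Fin n → ℕ} {w : ℝ → Fin n → Fin n → ℝ}
  {x : Fin n → ℝ → ℝ} {R : ℝ → Fin n → Finset (Fin n)}

lemma neg (hx : IsSolution Nin F w x R) : IsSolution Nin F w (fun i t => -x i t) R where
  removal t i := (hx.removal t i).neg
  integrable i t ht := by
    simp only [arcpUpdate_neg]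
    exact (hx.integrable i t ht).neg
  eq_add_integral i t ht := by
    simp only [arcpUpdate_neg, intervalIntegral.integral_neg]
    linarith [hx.eq_add_integral i t ht]

theorem le_of_forall_card_sdiff_le (hx : IsSolution Nin F w x R) {S : Finset (Fin n)}
    (hout : ∀ i ∈ S, #(Nin i \ S) ≤ F i) {β : ℝ} (hβ : 0 ≤ β)
    (hw : ∀ t i, ∀ j ∈ Nin i, 0 ≤ w t j i ∧ w t j i ≤ β) {c : ℝ} (h0 : ∀ i ∈ S, x i 0 ≤ c) :
    ∀ t, 0 ≤ t → ∀ i ∈ S, x i t ≤ c :=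
  forall_le_of_lt_imp_le_mul_sum_excess S (mul_nonneg n.cast_nonneg hβ)
    (fun i _ => hx.integrable i) (fun i _ => hx.eq_add_integral i) h0
    fun i hi t _ hc => arcpUpdate_le_mul_sum_excess (hx.removal t i) (hout i hi) hβ (hw t i) hc.le

theorem eq_of_forall_card_sdiff_le (hx : IsSolution Nin F w x R) {S : Finset (Fin n)}
    (hout : ∀ i ∈ S, #(Nin i \ S) ≤ F i) {β : ℝ} (hβ : 0 ≤ β)
    (hw : ∀ t i, ∀ j ∈ Nin i, 0 ≤ w t j i ∧ w t j i ≤ β) {c : ℝ} (h0 : ∀ i ∈ S, x i 0 = c) :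
    ∀ t, 0 ≤ t → ∀ i ∈ S, x i t = c := by
  intro t ht i hi
  have hle := hx.le_of_forall_card_sdiff_le hout hβ hw (fun i hi => (h0 i hi).le) t ht i hi
  have hge := hx.neg.le_of_forall_card_sdiff_le hout hβ hw (c := -c)
    (fun i hi => (neg_inj.2 (h0 i hi)).le) t ht i hi
  linarith

end IsSolution

end ARCP

theorem stmt5_general {n : ℕ}
    (Nin : Fin n → Finset (Fin n)) (f : ℝ)
    (S₁ S₂ : Finset (Fin n)) (h₁ : S₁.Nonempty) (h₂ : S₂.Nonempty)
    (hnr₁ : ¬ ARCP.FracEdgeReachable Nin f S₁)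
    (hnr₂ : ¬ ARCP.FracEdgeReachable Nin f S₂)
    (a b : ℝ) (hab : a < b)
    (α β : ℝ) (hα : 0 < α) (hαβ : α ≤ β)
    (w : ℝ → Fin n → Fin n → ℝ)
    (hw : ∀ t : ℝ, ∀ i : Fin n, ∀ j ∈ Nin i, α ≤ w t j i ∧ w t j i ≤ β)
    (x : Fin n → ℝ → ℝ) (R : ℝ → Fin n → Finset (Fin n))
    -- valid ARC-P removal sets (all agents behave normally)
    (hR : ∀ t : ℝ, ∀ i : Fin n, ARCP.IsARCPRemoval (Nin i) (fun j => x j t) (x i t)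
      (⌊f * (((Nin i).card : ℝ))⌋₊) (R t i))
    -- Carathéodory solution of the ARC-P dynamics (integral form)
    (hint : ∀ i : Fin n, ∀ t : ℝ, 0 ≤ t → IntervalIntegrable
      (fun s => ARCP.arcpUpdate (Nin i) (R s i) (fun j => w s j i)
        (fun j => x j s) (x i s)) volume 0 t)
    (hsol : ∀ i : Fin n, ∀ t : ℝ, 0 ≤ t → x i t = x i 0 + ∫ s in (0 : ℝ)..t,
      ARCP.arcpUpdate (Nin i) (R s i) (fun j => w s j i) (fun j => x j s) (x i s))
    -- initial values
    (hinit₁ : ∀ i ∈ S₁, x i 0 = a) (hinit₂ : ∀ i ∈ S₂, x i 0 = b) :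
    (∀ t : ℝ, 0 ≤ t → (∀ i ∈ S₁, x i t = a) ∧ (∀ i ∈ S₂, x i t = b)) ∧
    ¬ ∃ L : ℝ, ∀ i : Fin n, Tendsto (x i) atTop (𝓝 L) := by
  have hx : ARCP.IsSolution Nin (fun i => ⌊f * (((Nin i).card : ℝ))⌋₊) w x R := ⟨hR, hint, hsol⟩
  have hβ : 0 ≤ β := hα.le.trans hαβ
  have hw₀ : ∀ t i, ∀ j ∈ Nin i, 0 ≤ w t j i ∧ w t j i ≤ β :=
    fun t i j hj => ⟨hα.le.trans (hw t i j hj).1, (hw t i j hj).2⟩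
  have hS₁ := hx.eq_of_forall_card_sdiff_le
    (fun i hi => ARCP.card_sdiff_le_floor_of_not_fracEdgeReachable hnr₁ hi) hβ hw₀ hinit₁
  have hS₂ := hx.eq_of_forall_card_sdiff_le
    (fun i hi => ARCP.card_sdiff_le_floor_of_not_fracEdgeReachable hnr₂ hi) hβ hw₀ hinit₂
  refine ⟨fun t ht => ⟨hS₁ t ht, hS₂ t ht⟩, ?_⟩
  rintro ⟨L, hL⟩
  have hlimit : ∀ k c, (∀ t, 0 ≤ t → x k t = c) → L = c := fun k c hk =>
    tendsto_nhds_unique (hL k)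
      (tendsto_const_nhds.congr' (eventually_atTop.2 ⟨0, fun t ht => (hk t ht).symm⟩))
  obtain ⟨i, hi⟩ := h₁
  obtain ⟨j, hj⟩ := h₂
  exact hab.ne ((hlimit i a fun t ht => hS₁ t ht i hi).symm.trans
    (hlimit j b fun t ht => hS₂ t ht j hj))

/-- if `S₁, S₂` are nonempty disjoint sets, neither `f`-fraction edge
reachable, and all agents run ARC-P with parameter `f ∈ [0,1/2]` starting from value `a`
on `S₁`, `b` on `S₂` (`a < b`) and values in `[a,b]` elsewhere, then the agents of `S₁`
stay at `a` and those of `S₂` stay at `b` forever; in particular asymptotic consensus is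
not reached. -/
theorem stmt5 {n : ℕ}
    (Nin : Fin n → Finset (Fin n)) (f : ℝ) (hf : f ∈ Set.Icc (0 : ℝ) (1 / 2))
    (S₁ S₂ : Finset (Fin n)) (h₁ : S₁.Nonempty) (h₂ : S₂.Nonempty)
    (hdisj : Disjoint S₁ S₂)
    (hnr₁ : ¬ ARCP.FracEdgeReachable Nin f S₁)
    (hnr₂ : ¬ ARCP.FracEdgeReachable Nin f S₂)
    (a b : ℝ) (hab : a < b)
    (α β : ℝ) (hα : 0 < α) (hαβ : α ≤ β)
    (w : ℝ → Fin n → Fin n → ℝ)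
    (hw : ∀ t : ℝ, ∀ i : Fin n, ∀ j ∈ Nin i, α ≤ w t j i ∧ w t j i ≤ β)
    (x : Fin n → ℝ → ℝ) (R : ℝ → Fin n → Finset (Fin n))
    -- valid ARC-P removal sets (all agents behave normally)
    (hR : ∀ t : ℝ, ∀ i : Fin n, ARCP.IsARCPRemoval (Nin i) (fun j => x j t) (x i t)
      (⌊f * (((Nin i).card : ℝ))⌋₊) (R t i))
    -- Carathéodory solution of the ARC-P dynamics (integral form)
    (hint : ∀ i : Fin n, ∀ t : ℝ, 0 ≤ t → IntervalIntegrable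
      (fun s => ARCP.arcpUpdate (Nin i) (R s i) (fun j => w s j i)
        (fun j => x j s) (x i s)) volume 0 t)
    (hsol : ∀ i : Fin n, ∀ t : ℝ, 0 ≤ t → x i t = x i 0 + ∫ s in (0 : ℝ)..t,
      ARCP.arcpUpdate (Nin i) (R s i) (fun j => w s j i) (fun j => x j s) (x i s))
    -- initial values
    (hinit₁ : ∀ i ∈ S₁, x i 0 = a) (hinit₂ : ∀ i ∈ S₂, x i 0 = b)
    (hinit : ∀ i : Fin n, x i 0 ∈ Set.Icc a b) :
    (∀ t : ℝ, 0 ≤ t → (∀ i ∈ S₁, x i t = a) ∧ (∀ i ∈ S₂, x i t = b)) ∧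
    ¬ ∃ L : ℝ, ∀ i : Fin n, Tendsto (x i) atTop (𝓝 L) :=
  stmt5_general Nin f S₁ S₂ h₁ h₂ hnr₁ hnr₂ a b hab α β hα hαβ w hw x R hR hint hsol hinit₁ hinit₂
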